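/- Let X be a Banach space with a 1-unconditional Schauder decomposition into subspaces Xᵢ, and suppose for each i there exist δᵢ > 0 and a map ζᵢ : ℓ₂ → S(Xᵢ) such that (a) ‖x−y‖ ≤ i implies ‖ζᵢ(x)−ζᵢ(y)‖ ≤ δᵢ/(i·2ⁱ), and (b) liminf over t→∞ of inf{‖ζᵢ(x)−ζᵢ(y)‖ : ‖x−y‖ ≥ t} ≥ δᵢ. Fix x₀ ∈ ℓ₂. Then f(x) = Σᵢ (i/δᵢ)(ζᵢ(x) − ζᵢ(x₀)) is a well-defined coarse embedding of ℓ₂ into X. -/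

import Mathlib

/-- The separable Hilbert space `ℓ₂`. -/
noncomputable abbrev ellTwo : Type := lp (fun _ : ℕ => ℝ) 2

/-!
Each increment `ζᵢ x - ζᵢ y` has norm at most `2`, and once `‖x - y‖ ≤ i` the rescaled
increment `(i/δᵢ)(ζᵢ x - ζᵢ y)` has norm at most `2⁻ⁱ`; so the series defining `f x - f y`
converges, with norm bounded in terms of `‖x - y‖` alone. Conversely, by 1-unconditionality the
norm of the sum dominates the norm of each summand, and the `k`-th summand has norm at least
about `k` as soon as `‖x - y‖` is large enough, by the liminf condition on `ζₖ`.
-/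

open Filter Finset

section Unconditional

variable {ι X : Type*} [NormedAddCommGroup X] [NormedSpace ℝ X]

def IsOneUnconditional (V : ι → Submodule ℝ X) : Prop :=
  ∀ y : ι → X, (∀ i, y i ∈ V i) → Summable y →
    ∀ ε : ι → ℝ, (∀ i, ε i = 1 ∨ ε i = -1) →
      Summable (fun i => ε i • y i) ∧ ‖∑' i, ε i • y i‖ = ‖∑' i, y i‖

theorem IsOneUnconditional.norm_le_norm_tsum [DecidableEq ι] {V : ι → Submodule ℝ X}
    (hV : IsOneUnconditional V) {y : ι → X} (hyV : ∀ i, y i ∈ V i) (hy : Summable y) (j : ι) :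
    ‖y j‖ ≤ ‖∑' i, y i‖ := by
  set ε : ι → ℝ := fun i => if i = j then 1 else -1
  obtain ⟨hεy, hεnorm⟩ := hV y hyV hy ε fun i => by by_cases h : i = j <;> simp [ε, h]
  -- flipping the signs of all summands but the `j`-th one and adding back isolates `2 • y j`
  have hsum : ∑' i, y i + ∑' i, ε i • y i = (2 : ℝ) • y j := by
    rw [← hy.tsum_add hεy, two_smul]
    refine (tsum_congr fun i => ?_).trans (tsum_ite_eq j fun _ => y j + y j)
    by_cases h : i = j <;> simp [ε, h]
  have := norm_add_le (∑' i, y i) (∑' i, ε i • y i)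
  rw [hsum, hεnorm, norm_smul, Real.norm_two] at this
  linarith

end Unconditional

section Coarse

variable {E X : Type*} [SeminormedAddCommGroup E] [SeminormedAddCommGroup X]

def IsCoarseEmbedding (F : E → X) : Prop :=
  ∃ ρ₁ ρ₂ : ℝ → ℝ,
    (∀ x y : E, ρ₁ ‖x - y‖ ≤ ‖F x - F y‖ ∧ ‖F x - F y‖ ≤ ρ₂ ‖x - y‖) ∧ Tendsto ρ₁ atTop atTop

theorem exists_tendsto_atTop_forall_le {α : Type*} {d f : α → ℝ} (hf : ∀ a, 0 ≤ f a)
    (h : ∀ n : ℕ, ∃ s : ℝ, ∀ a, s ≤ d a → (n : ℝ) ≤ f a) :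
    ∃ ρ : ℝ → ℝ, Tendsto ρ atTop atTop ∧ ∀ a, ρ (d a) ≤ f a := by
  classical
  choose s hs using h
  -- `t n ≥ n` guarantees that every `n` with `t n ≤ r` is at most `⌈r⌉₊`
  set t : ℕ → ℝ := fun n => max (s n) n
  set g : ℝ → ℕ := fun r => Nat.findGreatest (fun n => t n ≤ r) ⌈r⌉₊
  refine ⟨fun r => g r, tendsto_natCast_atTop_iff.2 ?_, fun a => ?_⟩
  · refine tendsto_atTop.2 fun n => (eventually_ge_atTop (t n)).mono fun r hr => ?_
    have hnr : (n : ℝ) ≤ r := (le_max_right _ _).trans hr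
    exact Nat.le_findGreatest (Nat.cast_le.1 (hnr.trans (Nat.le_ceil r))) hr
  · rcases Nat.eq_zero_or_pos (g (d a)) with h0 | hpos
    · simpa [h0] using hf a
    · have htg : t (g (d a)) ≤ d a := Nat.findGreatest_of_ne_zero rfl hpos.ne'
      exact hs _ a ((le_max_left _ _).trans htg)

theorem isCoarseEmbedding_of_forall_exists {F : E → X}
    (hupper : ∀ r : ℝ, ∃ C : ℝ, ∀ x y : E, ‖x - y‖ ≤ r → ‖F x - F y‖ ≤ C)
    (hlower : ∀ n : ℕ, ∃ s : ℝ, ∀ x y : E, s ≤ ‖x - y‖ → (n : ℝ) ≤ ‖F x - F y‖) :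
    IsCoarseEmbedding F := by
  choose C hC using hupper
  obtain ⟨ρ₁, hρ₁, hρ₁F⟩ := exists_tendsto_atTop_forall_le (d := fun p : E × E => ‖p.1 - p.2‖)
    (fun p => norm_nonneg (F p.1 - F p.2)) fun n => (hlower n).imp fun s hs p => hs p.1 p.2
  exact ⟨ρ₁, C, fun x y => ⟨hρ₁F (x, y), hC _ x y le_rfl⟩, hρ₁⟩

end Coarse

section Series

variable {E X : Type*} [SeminormedAddCommGroup E] [NormedAddCommGroup X] {φ : ℕ → E → X}

theorem norm_sub_add_le_half_pow
    (hφ : ∀ (i : ℕ) x y, ‖x - y‖ ≤ (i : ℝ) + 1 → ‖φ i x - φ i y‖ ≤ (1 / 2 : ℝ) ^ (i + 1))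
    {x y : E} {N : ℕ} (hN : ‖x - y‖ ≤ N) (i : ℕ) :
    ‖φ (i + N) x - φ (i + N) y‖ ≤ (1 / 2 : ℝ) ^ (i + 1) := by
  refine (hφ (i + N) x y ?_).trans (pow_le_pow_of_le_one (by norm_num) (by norm_num) (by omega))
  push_cast
  linarith [i.cast_nonneg (α := ℝ)]

theorem summable_norm_sub
    (hφ : ∀ (i : ℕ) x y, ‖x - y‖ ≤ (i : ℝ) + 1 → ‖φ i x - φ i y‖ ≤ (1 / 2 : ℝ) ^ (i + 1))
    (x y : E) : Summable fun i => ‖φ i x - φ i y‖ := by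
  rw [← summable_nat_add_iff ⌈‖x - y‖⌉₊]
  exact .of_nonneg_of_le (fun _ => norm_nonneg _)
    (norm_sub_add_le_half_pow hφ (Nat.le_ceil _)) (summable_geometric_two.comp_injective
      (add_left_injective 1))

theorem tsum_norm_sub_le
    (hφ : ∀ (i : ℕ) x y, ‖x - y‖ ≤ (i : ℝ) + 1 → ‖φ i x - φ i y‖ ≤ (1 / 2 : ℝ) ^ (i + 1))
    {B : ℕ → ℝ} (hB : ∀ i x y, ‖φ i x - φ i y‖ ≤ B i) {x y : E} {N : ℕ} (hN : ‖x - y‖ ≤ N) :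
    ∑' i, ‖φ i x - φ i y‖ ≤ ∑ i ∈ range N, B i + 1 := by
  have hgeo : Summable fun i : ℕ => (1 / 2 : ℝ) ^ (i + 1) :=
    summable_geometric_two.comp_injective (add_left_injective 1)
  have hgeo_sum : ∑' i : ℕ, (1 / 2 : ℝ) ^ (i + 1) = 1 := by
    simp only [pow_succ, tsum_mul_right, tsum_geometric_two]
    norm_num
  have htail : ∑' i, ‖φ (i + N) x - φ (i + N) y‖ ≤ 1 :=
    hgeo_sum ▸ ((summable_nat_add_iff N).2 (summable_norm_sub hφ x y)).tsum_le_tsum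
      (norm_sub_add_le_half_pow hφ hN) hgeo
  rw [← (summable_norm_sub hφ x y).sum_add_tsum_nat_add N]
  exact add_le_add (sum_le_sum fun i _ => hB i x y) htail

variable [NormedSpace ℝ X] [CompleteSpace X]

theorem isCoarseEmbedding_tsum_sub {V : ℕ → Submodule ℝ X} (hV : IsOneUnconditional V)
    (hφV : ∀ i x, φ i x ∈ V i)
    (hφ : ∀ (i : ℕ) x y, ‖x - y‖ ≤ (i : ℝ) + 1 → ‖φ i x - φ i y‖ ≤ (1 / 2 : ℝ) ^ (i + 1))
    {B : ℕ → ℝ} (hB : ∀ i x y, ‖φ i x - φ i y‖ ≤ B i)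
    (hsep : ∀ n : ℕ, ∃ k : ℕ, ∃ s : ℝ, ∀ x y, s ≤ ‖x - y‖ → (n : ℝ) ≤ ‖φ k x - φ k y‖)
    (x₀ : E) : IsCoarseEmbedding fun x => ∑' i, (φ i x - φ i x₀) := by
  have hsummable (x y : E) : Summable fun i => φ i x - φ i y :=
    (summable_norm_sub hφ x y).of_norm
  have hdiff (x y : E) :
      ∑' i, (φ i x - φ i x₀) - ∑' i, (φ i y - φ i x₀) = ∑' i, (φ i x - φ i y) := by
    rw [← (hsummable x x₀).tsum_sub (hsummable y x₀)]
    exact tsum_congr fun i => sub_sub_sub_cancel_right _ _ _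
  refine isCoarseEmbedding_of_forall_exists (fun r => ⟨∑ i ∈ range ⌈r⌉₊, B i + 1,
    fun x y hxy => ?_⟩) fun n => ?_
  · rw [hdiff]
    exact (norm_tsum_le_tsum_norm (summable_norm_sub hφ x y)).trans
      (tsum_norm_sub_le hφ hB (hxy.trans (Nat.le_ceil r)))
  · obtain ⟨k, s, hs⟩ := hsep n
    refine ⟨s, fun x y hxy => ?_⟩
    rw [hdiff]
    exact (hs x y hxy).trans (hV.norm_le_norm_tsum (fun i => sub_mem (hφV i x) (hφV i y))
      (hsummable x y) k)

end Series

section Scaled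

variable {E X : Type*} [NormedAddCommGroup X] [NormedSpace ℝ X]

noncomputable def scaledMaps (δ : ℕ → ℝ) (ζ : ℕ → E → X) (i : ℕ) (x : E) : X :=
  (((i : ℝ) + 1) / δ i) • ζ i x

variable {δ : ℕ → ℝ} {ζ : ℕ → E → X}

theorem norm_scaledMaps_sub (hδ : ∀ i, 0 < δ i) (i : ℕ) (x y : E) :
    ‖scaledMaps δ ζ i x - scaledMaps δ ζ i y‖ = ((i : ℝ) + 1) / δ i * ‖ζ i x - ζ i y‖ := by
  have := hδ i
  rw [scaledMaps, scaledMaps, ← smul_sub, norm_smul, Real.norm_of_nonneg (by positivity)]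

theorem norm_scaledMaps_sub_le_half_pow [SeminormedAddCommGroup E] (hδ : ∀ i, 0 < δ i)
    (ha : ∀ (i : ℕ) (x y : E), ‖x - y‖ ≤ (i : ℝ) + 1 →
      ‖ζ i x - ζ i y‖ ≤ δ i / (((i : ℝ) + 1) * 2 ^ (i + 1)))
    (i : ℕ) (x y : E) (hxy : ‖x - y‖ ≤ (i : ℝ) + 1) :
    ‖scaledMaps δ ζ i x - scaledMaps δ ζ i y‖ ≤ (1 / 2 : ℝ) ^ (i + 1) := by
  have := hδ i
  rw [norm_scaledMaps_sub hδ]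
  refine (mul_le_mul_of_nonneg_left (ha i x y hxy) (by positivity)).trans_eq ?_
  rw [div_pow, one_pow]
  field_simp

theorem norm_scaledMaps_sub_le [SeminormedAddCommGroup E] (hδ : ∀ i, 0 < δ i)
    (hsphere : ∀ i x, ‖ζ i x‖ = 1)
    (i : ℕ) (x y : E) : ‖scaledMaps δ ζ i x - scaledMaps δ ζ i y‖ ≤ ((i : ℝ) + 1) / δ i * 2 := by
  have := hδ i
  rw [norm_scaledMaps_sub hδ]
  refine mul_le_mul_of_nonneg_left ((norm_sub_le _ _).trans_eq ?_) (by positivity)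
  rw [hsphere, hsphere, one_add_one_eq_two]

theorem exists_le_norm_scaledMaps_sub [SeminormedAddCommGroup E] (hδ : ∀ i, 0 < δ i)
    (hb : ∀ (i : ℕ) (c : ℝ), c < δ i → ∃ t : ℝ, ∀ x y : E, t ≤ ‖x - y‖ → c ≤ ‖ζ i x - ζ i y‖)
    (n : ℕ) :
    ∃ s : ℝ, ∀ x y, s ≤ ‖x - y‖ → (n : ℝ) ≤ ‖scaledMaps δ ζ n x - scaledMaps δ ζ n y‖ := by
  have := hδ n
  -- `c = n δₙ / (n + 1)` is the level that the weight `(n + 1) / δₙ` rescales to `n`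
  obtain ⟨s, hs⟩ := hb n (n / ((n : ℝ) + 1) * δ n)
    (mul_lt_of_lt_one_left this ((div_lt_one (by positivity)).2 (by linarith)))
  refine ⟨s, fun x y hxy => ?_⟩
  rw [norm_scaledMaps_sub hδ]
  refine le_trans (le_of_eq ?_) (mul_le_mul_of_nonneg_left (hs x y hxy) (by positivity))
  field_simp

end Scaled

theorem coarseEmbedding_ellTwo_into_unconditional {X : Type*}
    [NormedAddCommGroup X] [NormedSpace ℝ X] [CompleteSpace X]
    (Xsub : ℕ → Submodule ℝ X)
    -- 1-unconditionality of the decomposition: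
    (huncond : ∀ y : ℕ → X, (∀ i, y i ∈ Xsub i) → Summable y →
      ∀ ε : ℕ → ℝ, (∀ i, ε i = 1 ∨ ε i = -1) →
        Summable (fun i => ε i • y i) ∧ ‖∑' i, ε i • y i‖ = ‖∑' i, y i‖)
    (δ : ℕ → ℝ) (hδ : ∀ i, 0 < δ i)
    (ζ : ℕ → ellTwo → X)
    (hmem : ∀ i x, ζ i x ∈ Xsub i)
    (hsphere : ∀ i x, ‖ζ i x‖ = 1)
    (ha : ∀ (i : ℕ) (x y : ellTwo), ‖x - y‖ ≤ ((i : ℝ) + 1) →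
      ‖ζ i x - ζ i y‖ ≤ δ i / (((i : ℝ) + 1) * 2 ^ (i + 1)))
    (hb : ∀ (i : ℕ) (c : ℝ), c < δ i → ∃ t : ℝ, ∀ x y : ellTwo,
      t ≤ ‖x - y‖ → c ≤ ‖ζ i x - ζ i y‖)
    (x₀ : ellTwo) :
    ∃ F : ellTwo → X,
      (∀ x : ellTwo,
        Summable (fun i : ℕ => (((i : ℝ) + 1) / δ i) • (ζ i x - ζ i x₀)) ∧
        F x = ∑' i : ℕ, (((i : ℝ) + 1) / δ i) • (ζ i x - ζ i x₀)) ∧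
      ∃ ρ₁ ρ₂ : ℝ → ℝ,
        (∀ x y : ellTwo, ρ₁ (‖x - y‖) ≤ ‖F x - F y‖ ∧ ‖F x - F y‖ ≤ ρ₂ (‖x - y‖)) ∧
        Filter.Tendsto ρ₁ Filter.atTop Filter.atTop := by
  have hsmall := norm_scaledMaps_sub_le_half_pow hδ ha
  simp only [smul_sub]
  exact ⟨_, fun x => ⟨(summable_norm_sub hsmall x x₀).of_norm, rfl⟩,
    isCoarseEmbedding_tsum_sub huncond (fun i x => Submodule.smul_mem _ _ (hmem i x)) hsmall
      (norm_scaledMaps_sub_le hδ hsphere) (fun n => ⟨n, exists_le_norm_scaledMaps_sub hδ hb n⟩) x₀⟩
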